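/- arXiv:2409.10667 — 8 statements merged into one kernel-verified Lean document; each statement's English description precedes it below -/
import Mathlib

section
/- Let ε > 0, Δ > 0 and k ∈ ℕ. Let Y = (Y_1, …, Y_k) be i.i.d. real random variables, each with the Laplace distribution Lap(Δ/ε), i.e., with Lebesgue density x ↦ (ε/(2Δ))·e^{−ε|x|/Δ}. Then for all a, b ∈ ℝ^k with ‖a − b‖₁ ≤ Δ and every Borel set S ⊆ ℝ^k, Pr[a + Y ∈ S] ≤ e^ε · Pr[b + Y ∈ S]. (Laplace mechanism satisfies ε-differential privacy.) -/
open MeasureTheory Real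

open scoped ENNReal

/-! The law of `a + Y` has density `x ↦ ∏ i, p (x i - a i)`, where `p` is the density of
`Lap(t)`, `t = Δ/ε`. By the triangle inequality `p (x - a) ≤ exp (|a - b| / t) · p (x - b)`
pointwise, so the two product densities differ at most by the factor
`exp (‖a - b‖₁ / t) ≤ exp ε`, and integrating over `S` gives the bound. -/

theorem lintegral_fin_nat_prod_eq_prod {E : Type*} [MeasurableSpace E] {n : ℕ}
    {μ : Fin n → Measure E} [∀ i, SigmaFinite (μ i)] {f : Fin n → E → ℝ≥0∞}
    (hf : ∀ i, Measurable (f i)) :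
    ∫⁻ x, ∏ i, f i (x i) ∂Measure.pi μ = ∏ i, ∫⁻ x, f i x ∂μ i := by
  induction n with
  | zero => simp
  | succ n ih =>
    rw [← ((measurePreserving_piFinSuccAbove μ 0).symm).lintegral_comp (by fun_prop)]
    simp_rw [MeasurableEquiv.piFinSuccAbove_symm_apply, Fin.insertNthEquiv,
      Fin.prod_univ_succ, Fin.insertNth_zero, Equiv.coe_fn_mk, Fin.cons_succ,
      Fin.zero_succAbove, cast_eq, Fin.cons_zero]
    rw [lintegral_prod_mul (f := f 0) (g := fun y : Fin n → E => ∏ i, f i.succ (y i))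
      (hf 0).aemeasurable
      (Finset.measurable_prod _ fun i _ => (hf i.succ).comp (measurable_pi_apply i)).aemeasurable,
      ih fun i => hf i.succ]

section Pi

variable {ι E : Type*} [Fintype ι] [MeasurableSpace E] {μ : ι → Measure E}
  [∀ i, SigmaFinite (μ i)]

theorem lintegral_fintype_prod_eq_prod {f : ι → E → ℝ≥0∞} (hf : ∀ i, Measurable (f i)) :
    ∫⁻ x, ∏ i, f i (x i) ∂Measure.pi μ = ∏ i, ∫⁻ x, f i x ∂μ i := by
  let e := (Fintype.equivFin ι).symm
  rw [← (measurePreserving_piCongrLeft _ e).lintegral_comp (by fun_prop)]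
  simp_rw [← e.prod_comp, MeasurableEquiv.coe_piCongrLeft, Equiv.piCongrLeft_apply_apply]
  exact lintegral_fin_nat_prod_eq_prod fun i => hf (e i)

theorem pi_withDensity {f : ι → E → ℝ≥0∞} (hf : ∀ i, Measurable (f i))
    [∀ i, SigmaFinite ((μ i).withDensity (f i))] :
    Measure.pi (fun i => (μ i).withDensity (f i))
      = (Measure.pi μ).withDensity fun x => ∏ i, f i (x i) := by
  refine Measure.pi_eq fun s hs => ?_
  have hbox : (Set.univ.pi s).indicator (fun x => ∏ i, f i (x i))
      = fun x => ∏ i, (s i).indicator (f i) (x i) := by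
    ext x
    classical simp [Set.indicator_apply, Fintype.prod_ite_zero]
  rw [withDensity_apply _ (.univ_pi hs), ← lintegral_indicator (.univ_pi hs), hbox,
    lintegral_fintype_prod_eq_prod fun i => (hf i).indicator (hs i)]
  simp_rw [lintegral_indicator (hs _), withDensity_apply _ (hs _)]

end Pi

section Translation

variable {G : Type*} [MeasurableSpace G] [AddCommGroup G] [MeasurableAdd G] {μ : Measure G}
  [μ.IsAddLeftInvariant] [SFinite μ]

theorem withDensity_preimage_add_left (g : G → ℝ≥0∞) (c : G) (S : Set G) :
    μ.withDensity g {y | c + y ∈ S} = ∫⁻ x in S, g (x - c) ∂μ := by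
  rw [withDensity_apply', ← (measurePreserving_add_left μ c).setLIntegral_comp_preimage_emb
    (measurableEmbedding_addLeft c) (fun x => g (x - c))]
  simp only [add_sub_cancel_left]
  rfl

theorem withDensity_preimage_add_left_le {g : G → ℝ≥0∞} {a b : G} {C : ℝ≥0∞} (hC : C ≠ ⊤)
    (h : ∀ x, g (x - a) ≤ C * g (x - b)) (S : Set G) :
    μ.withDensity g {y | a + y ∈ S} ≤ C * μ.withDensity g {y | b + y ∈ S} := by
  rw [withDensity_preimage_add_left, withDensity_preimage_add_left, ← lintegral_const_mul' _ _ hC]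
  exact lintegral_mono fun x => h x

end Translation

noncomputable def laplacePDF (t x : ℝ) : ℝ≥0∞ :=
  ENNReal.ofReal ((2 * t)⁻¹ * exp (-|x| / t))

instance (t : ℝ) : SigmaFinite (volume.withDensity (laplacePDF t)) :=
  SigmaFinite.withDensity_of_ne_top' fun _ => ENNReal.ofReal_ne_top

theorem laplacePDF_sub_le {t : ℝ} (ht : 0 ≤ t) (x a b : ℝ) :
    laplacePDF t (x - a) ≤ ENNReal.ofReal (exp (|a - b| / t)) * laplacePDF t (x - b) := by
  rw [laplacePDF, laplacePDF, ← ENNReal.ofReal_mul (exp_nonneg _), mul_left_comm, ← exp_add,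
    ← add_div]
  gcongr
  linarith [abs_sub_le x a b]

theorem prod_laplacePDF_sub_le {ι : Type*} [Fintype ι] {t : ℝ} (ht : 0 ≤ t) (x a b : ι → ℝ) :
    ∏ i, laplacePDF t (x i - a i)
      ≤ ENNReal.ofReal (exp ((∑ i, |a i - b i|) / t)) * ∏ i, laplacePDF t (x i - b i) :=
  calc ∏ i, laplacePDF t (x i - a i)
      ≤ ∏ i, ENNReal.ofReal (exp (|a i - b i| / t)) * laplacePDF t (x i - b i) :=
        Finset.prod_le_prod' fun i _ => laplacePDF_sub_le ht _ _ _
    _ = _ := by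
      rw [Finset.prod_mul_distrib, ← ENNReal.ofReal_prod_of_nonneg fun _ _ => exp_nonneg _,
        ← exp_sum, Finset.sum_div]

theorem laplace_mechanism_eps_dp_general
    (ε Δ : ℝ) (hε : 0 < ε) (hΔ : 0 < Δ) (k : ℕ)
    (μ : Measure (Fin k → ℝ))
    (hμ : μ = Measure.pi (fun _ : Fin k => (volume : Measure ℝ).withDensity
      (fun x => ENNReal.ofReal (ε / (2 * Δ) * Real.exp (-(ε * |x|) / Δ)))))
    (a b : Fin k → ℝ) (hab : ∑ i, |a i - b i| ≤ Δ)
    (S : Set (Fin k → ℝ)) :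
    μ {y | a + y ∈ S} ≤ ENNReal.ofReal (Real.exp ε) * μ {y | b + y ∈ S} := by
  have hscale : (fun x => ENNReal.ofReal (ε / (2 * Δ) * exp (-(ε * |x|) / Δ)))
      = laplacePDF (Δ / ε) := by
    ext x
    rw [laplacePDF]
    congr 2 <;> field_simp
  have hdensity : μ = volume.withDensity fun x => ∏ i, laplacePDF (Δ / ε) (x i) := by
    rw [hμ, hscale, pi_withDensity fun _ => by unfold laplacePDF; fun_prop, volume_pi]
  rw [hdensity]
  refine withDensity_preimage_add_left_le ENNReal.ofReal_ne_top (fun x => ?_) S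
  refine (prod_laplacePDF_sub_le (by positivity) x a b).trans ?_
  gcongr ?_ * _
  gcongr
  rwa [div_le_iff₀ (by positivity), mul_div_cancel₀ _ hε.ne']

/-- The Laplace mechanism satisfies ε-differential privacy: adding i.i.d. `Lap(Δ/ε)` noise
(density `x ↦ (ε/(2Δ))·exp(−ε|x|/Δ)`) to any two vectors at ℓ₁-distance at most `Δ`
yields output distributions within a multiplicative factor `e^ε` on every Borel set. -/
theorem laplace_mechanism_eps_dp
    (ε Δ : ℝ) (hε : 0 < ε) (hΔ : 0 < Δ) (k : ℕ)
    (μ : Measure (Fin k → ℝ))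
    (hμ : μ = Measure.pi (fun _ : Fin k => (volume : Measure ℝ).withDensity
      (fun x => ENNReal.ofReal (ε / (2 * Δ) * Real.exp (-(ε * |x|) / Δ)))))
    (a b : Fin k → ℝ) (hab : ∑ i, |a i - b i| ≤ Δ)
    (S : Set (Fin k → ℝ)) (hS : MeasurableSet S) :
    μ {y | a + y ∈ S} ≤ ENNReal.ofReal (Real.exp ε) * μ {y | b + y ∈ S} :=
  laplace_mechanism_eps_dp_general ε Δ hε hΔ k μ hμ a b hab S
end

section
/- Let ε > 0, let Δ be a positive integer, and let k ∈ ℕ. Let Y = (Y_1, …, Y_k) be i.i.d. ℤ-valued random variables, each with the discrete Laplace distribution Lap_ℤ(Δ/ε), i.e., Pr[Y_i = x] = ((e^{ε/Δ} − 1)/(e^{ε/Δ} + 1))·e^{−ε|x|/Δ} for x ∈ ℤ. Then for all a, b ∈ ℤ^k with ‖a − b‖₁ ≤ Δ and every set S ⊆ ℤ^k, Pr[a + Y ∈ S] ≤ e^ε · Pr[b + Y ∈ S]. (Discrete Laplace mechanism satisfies ε-differential privacy.) -/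
/-!
Every coordinate density `x ↦ c·e^{-r|x|}` with `r = ε/Δ` satisfies the shift bound
`f (x) ≤ e^{r|x - y|} f (y)` by the triangle inequality. Multiplying over the coordinates of
`s - a` and `s - b` gives a pointwise ratio of at most `e^{r‖a - b‖₁} ≤ e^{rΔ} = e^ε` between the
two product densities, and summing this over `S` gives the privacy bound; the densities are
summable on `ℤ^k` because they are products of summable nonnegative functions.
-/

open Real

theorem summable_pi_prod_of_nonneg {ι β : Type*} [Fintype ι] {g : ι → β → ℝ}
    (hg : ∀ i, Summable (g i)) (hg0 : ∀ i x, 0 ≤ g i x) :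
    Summable fun s : ι → β => ∏ i, g i (s i) := by
  classical
  refine summable_of_sum_le (c := ∏ i, ∑' x, g i x)
    (fun s => Finset.prod_nonneg fun i _ => hg0 i (s i)) fun u => ?_
  calc ∑ s ∈ u, ∏ i, g i (s i)
      ≤ ∑ s ∈ Fintype.piFinset fun i => u.image (· i), ∏ i, g i (s i) :=
        Finset.sum_le_sum_of_subset_of_nonneg
          (fun s hs => Fintype.mem_piFinset.2 fun i => Finset.mem_image_of_mem _ hs)
          (fun s _ _ => Finset.prod_nonneg fun i _ => hg0 i (s i))
    _ = ∏ i, ∑ x ∈ u.image (· i), g i x := (Finset.prod_univ_sum _ _).symm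
    _ ≤ ∏ i, ∑' x, g i x :=
        Finset.prod_le_prod (fun i _ => Finset.sum_nonneg fun x _ => hg0 i x)
          fun i _ => (hg i).sum_le_tsum _ fun x _ => hg0 i x

theorem prod_sub_le_exp_mul_prod_sub {ι : Type*} [Fintype ι] {f : ℤ → ℝ} {r : ℝ}
    (hf0 : ∀ x, 0 ≤ f x) (hf : ∀ x y, f x ≤ exp (r * |x - y|) * f y) (s a b : ι → ℤ) :
    ∏ i, f (s i - a i) ≤ exp (r * ∑ i, |a i - b i|) * ∏ i, f (s i - b i) := by
  have hshift : ∀ i, f (s i - a i) ≤ exp (r * |a i - b i|) * f (s i - b i) := fun i => by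
    simpa [abs_sub_comm (b i)] using hf (s i - a i) (s i - b i)
  calc ∏ i, f (s i - a i)
      ≤ ∏ i, exp (r * |a i - b i|) * f (s i - b i) :=
        Finset.prod_le_prod (fun i _ => hf0 _) fun i _ => hshift i
    _ = exp (r * ∑ i, |a i - b i|) * ∏ i, f (s i - b i) := by
        rw [Finset.prod_mul_distrib, ← exp_sum, Int.cast_sum, Finset.mul_sum]

/-- The density of the discrete Laplace distribution `Lap_ℤ(1/r)`. -/
noncomputable def discreteLaplace (r : ℝ) (x : ℤ) : ℝ :=
  (exp r - 1) / (exp r + 1) * exp (-(r * |(x : ℝ)|))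

section discreteLaplace

variable {r : ℝ}

theorem discreteLaplace_nonneg (hr : 0 ≤ r) (x : ℤ) : 0 ≤ discreteLaplace r x := by
  have : 1 ≤ exp r := one_le_exp hr
  unfold discreteLaplace
  positivity

theorem summable_discreteLaplace (hr : 0 < r) : Summable (discreteLaplace r) := by
  have hgeom : Summable fun n : ℕ => exp (n * -r) :=
    summable_exp_nat_mul_iff.2 (neg_neg_of_pos hr)
  refine Summable.mul_left _ (Summable.of_nat_of_neg ?_ ?_) <;>
    refine hgeom.congr fun n => ?_ <;> simp [mul_comm]

theorem discreteLaplace_le_exp_mul (hr : 0 ≤ r) (x y : ℤ) :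
    discreteLaplace r x ≤ exp (r * |x - y|) * discreteLaplace r y := by
  have htri : |(y : ℝ)| - |(x : ℝ)| ≤ |(x : ℝ) - y| := by
    simpa [abs_sub_comm] using abs_sub_abs_le_abs_sub (y : ℝ) x
  unfold discreteLaplace
  rw [mul_left_comm, ← exp_add]
  gcongr
  · exact div_nonneg (by linarith [one_le_exp hr]) (by positivity)
  · push_cast
    nlinarith

end discreteLaplace

/-- The discrete Laplace mechanism satisfies ε-differential privacy: adding i.i.d. noise with
PMF `x ↦ ((e^{ε/Δ} − 1)/(e^{ε/Δ} + 1))·e^{−ε|x|/Δ}` on ℤ to any two integer vectors at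
ℓ₁-distance at most `Δ` yields output distributions within a factor `e^ε` on every `S ⊆ ℤ^k`. -/
theorem discrete_laplace_mechanism_eps_dp
    (ε : ℝ) (hε : 0 < ε) (Δ : ℤ) (hΔ : 0 < Δ) (k : ℕ)
    (f : ℤ → ℝ)
    (hf : ∀ x : ℤ, f x = (Real.exp (ε / (Δ : ℝ)) - 1) / (Real.exp (ε / (Δ : ℝ)) + 1)
        * Real.exp (-(ε * |(x : ℝ)|) / (Δ : ℝ)))
    (a b : Fin k → ℤ) (hab : ∑ i, |a i - b i| ≤ Δ)
    (S : Set (Fin k → ℤ)) :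
    ∑' s : S, ∏ i, f ((s : Fin k → ℤ) i - a i)
      ≤ Real.exp ε * ∑' s : S, ∏ i, f ((s : Fin k → ℤ) i - b i) := by
  have hΔ' : (0 : ℝ) < Δ := Int.cast_pos.2 hΔ
  set r := ε / Δ
  have hr : 0 < r := div_pos hε hΔ'
  obtain rfl : f = discreteLaplace r :=
    funext fun x => by rw [hf, discreteLaplace, neg_div, mul_div_right_comm]
  have hdensity (c : Fin k → ℤ) :
      Summable fun s : Fin k → ℤ => ∏ i, discreteLaplace r (s i - c i) :=
    summable_pi_prod_of_nonneg (g := fun i x => discreteLaplace r (x - c i))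
      (fun i => (Equiv.subRight (c i)).summable_iff.2 (summable_discreteLaplace hr))
      fun i x => discreteLaplace_nonneg hr.le _
  have hexp : exp (r * ∑ i, |a i - b i|) ≤ exp ε := by
    gcongr
    calc r * ((∑ i, |a i - b i| : ℤ) : ℝ) ≤ r * Δ := by gcongr
      _ = ε := div_mul_cancel₀ ε hΔ'.ne'
  have hratio (s : Fin k → ℤ) :
      ∏ i, discreteLaplace r (s i - a i) ≤ exp ε * ∏ i, discreteLaplace r (s i - b i) :=
    (prod_sub_le_exp_mul_prod_sub (discreteLaplace_nonneg hr.le)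
      (discreteLaplace_le_exp_mul hr.le) s a b).trans <|
      mul_le_mul_of_nonneg_right hexp
        (Finset.prod_nonneg fun i _ => discreteLaplace_nonneg hr.le _)
  rw [← tsum_mul_left]
  exact ((hdensity a).subtype S).tsum_le_tsum (fun s => hratio s)
    (((hdensity b).mul_left _).subtype S)
end

section
/- Let ε > 0, σ > 0, and let Δ be a positive integer. Let Y be a ℤ-valued random variable with the discrete Gaussian distribution N_ℤ(σ²), i.e., Pr[Y = x] = e^{−x²/(2σ²)} / Σ_{z∈ℤ} e^{−z²/(2σ²)}. Define δ = Pr[Y > εσ²/Δ − Δ/2] − e^ε · Pr[Y > εσ²/Δ + Δ/2]. Then for all a, b ∈ ℤ with |a − b| ≤ Δ and every set S ⊆ ℤ, Pr[a + Y ∈ S] ≤ e^ε · Pr[b + Y ∈ S] + δ. (Discrete Gaussian mechanism satisfies (ε,δ)-differential privacy with this exact δ.) -/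
open Real

/-!
Write `p` for the discrete Gaussian PMF. A shift by `d` multiplies it by an explicit exponential,
`p y = exp (d (2y + d) / (2σ²)) · p (y + d)`, so `p y ≤ e^ε p (y + d)` can fail only where
`d (2y + d) > 2εσ²`. There `y + d/2 > 0`, so a longer shift `Δ ≥ d` moves `y` further from the
origin and `p y - e^ε p (y + d) ≤ (p y - e^ε p (y + Δ))⁺` for all `y` and `0 ≤ d ≤ Δ`. Summing over
`S` bounds the privacy loss of every shift `|d| ≤ Δ` by the hockey-stick divergence
`∑ (p y - e^ε p (y + Δ))⁺` of the extreme shift, whose summand is positive exactly when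
`y > εσ²/Δ - Δ/2`; this evaluates the divergence to the stated `δ`.
-/

theorem tsum_subtype_le_mul_add_tsum {α β : Type*} {p q : α → ℝ} {r : β → ℝ} (e : α ≃ β)
    (c : ℝ) (hp : Summable p) (hq : Summable q) (hr : Summable r) (hr0 : ∀ y, 0 ≤ r y)
    (h : ∀ x, p x ≤ c * q x + r (e x)) (S : Set α) :
    ∑' x : S, p x ≤ c * ∑' x : S, q x + ∑' y, r y := by
  have hre : Summable (r ∘ e) := e.summable_iff.mpr hr
  have hcqS : Summable fun x : S => c * q x := (hq.subtype S).mul_left c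
  have hreS : Summable fun x : S => r (e x) := hre.subtype S
  calc ∑' x : S, p x
      ≤ ∑' x : S, (c * q x + r (e x)) := (hp.subtype S).tsum_le_tsum (fun x => h x) (hcqS.add hreS)
    _ = c * ∑' x : S, q x + ∑' x : S, r (e x) := by rw [hcqS.tsum_add hreS, tsum_mul_left]
    _ ≤ c * ∑' x : S, q x + ∑' y, r y := by
        grw [hre.tsum_subtype_le _ S (fun x => hr0 (e x)), e.tsum_eq r]

theorem Summable.posPart_sub_mul {α : Type*} {p q : α → ℝ} {c : ℝ} (hp : Summable p)
    (hp0 : ∀ x, 0 ≤ p x) (hq0 : ∀ x, 0 ≤ q x) (hc : 0 ≤ c) :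
    Summable fun x => (p x - c * q x)⁺ :=
  hp.of_nonneg_of_le (fun _ => posPart_nonneg _) fun x =>
    sup_le (by linarith [mul_nonneg hc (hq0 x)]) (hp0 x)

noncomputable section

def discreteGaussianWeight (σ : ℝ) (x : ℤ) : ℝ :=
  exp (-(x : ℝ) ^ 2 / (2 * σ ^ 2))

def discreteGaussianPMF (σ : ℝ) (x : ℤ) : ℝ :=
  discreteGaussianWeight σ x / ∑' z : ℤ, discreteGaussianWeight σ z

end

section

variable {σ : ℝ}

theorem summable_discreteGaussianWeight (hσ : σ ≠ 0) : Summable (discreteGaussianWeight σ) := by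
  have hT : 0 < 1 / (2 * π * σ ^ 2) := by positivity
  -- the Jacobi theta majorant `exp (-π T n²)` with `T = 1 / (2πσ²)` is the Gaussian weight
  refine (summable_pow_mul_jacobiTheta₂_term_bound 0 hT 0).congr fun n => ?_
  rw [pow_zero, one_mul, discreteGaussianWeight]
  congr 1
  field_simp
  ring

theorem discreteGaussianPMF_nonneg (x : ℤ) : 0 ≤ discreteGaussianPMF σ x :=
  div_nonneg (exp_pos _).le (tsum_nonneg fun _ => (exp_pos _).le)

theorem summable_discreteGaussianPMF (hσ : σ ≠ 0) : Summable (discreteGaussianPMF σ) :=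
  (summable_discreteGaussianWeight hσ).div_const _

theorem discreteGaussianPMF_neg (x : ℤ) : discreteGaussianPMF σ (-x) = discreteGaussianPMF σ x := by
  simp only [discreteGaussianPMF, discreteGaussianWeight, Int.cast_neg, neg_sq]

theorem discreteGaussianPMF_le_of_sq_le {m n : ℤ} (h : (m : ℝ) ^ 2 ≤ (n : ℝ) ^ 2) :
    discreteGaussianPMF σ n ≤ discreteGaussianPMF σ m := by
  refine div_le_div_of_nonneg_right (exp_le_exp.mpr ?_) (tsum_nonneg fun _ => (exp_pos _).le)
  exact div_le_div_of_nonneg_right (neg_le_neg h) (by positivity)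

theorem discreteGaussianPMF_eq_exp_mul_shift (hσ : σ ≠ 0) (y d : ℤ) :
    discreteGaussianPMF σ y
      = exp ((d : ℝ) * (2 * y + d) / (2 * σ ^ 2)) * discreteGaussianPMF σ (y + d) := by
  rw [discreteGaussianPMF, discreteGaussianPMF, ← mul_div_assoc, discreteGaussianWeight,
    discreteGaussianWeight, ← exp_add]
  congr 2
  push_cast
  field_simp
  ring

theorem discreteGaussianPMF_le_exp_mul_shift (hσ : σ ≠ 0) {ε : ℝ} {y d : ℤ}
    (h : (d : ℝ) * (2 * y + d) ≤ 2 * ε * σ ^ 2) :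
    discreteGaussianPMF σ y ≤ exp ε * discreteGaussianPMF σ (y + d) := by
  rw [discreteGaussianPMF_eq_exp_mul_shift hσ y d]
  refine mul_le_mul_of_nonneg_right (exp_le_exp.mpr ?_) (discreteGaussianPMF_nonneg _)
  rw [div_le_iff₀ (by positivity)]
  linarith

theorem exp_mul_shift_le_discreteGaussianPMF (hσ : σ ≠ 0) {ε : ℝ} {y d : ℤ}
    (h : 2 * ε * σ ^ 2 ≤ (d : ℝ) * (2 * y + d)) :
    exp ε * discreteGaussianPMF σ (y + d) ≤ discreteGaussianPMF σ y := by
  rw [discreteGaussianPMF_eq_exp_mul_shift hσ y d]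
  refine mul_le_mul_of_nonneg_right (exp_le_exp.mpr ?_) (discreteGaussianPMF_nonneg _)
  rw [le_div_iff₀ (by positivity)]
  linarith

theorem discreteGaussianPMF_le_exp_mul_shift_add_posPart (hσ : σ ≠ 0) {ε : ℝ} (hε : 0 ≤ ε)
    {d Δ : ℤ} (hd : 0 ≤ d) (hdΔ : d ≤ Δ) (y : ℤ) :
    discreteGaussianPMF σ y ≤ exp ε * discreteGaussianPMF σ (y + d)
      + (discreteGaussianPMF σ y - exp ε * discreteGaussianPMF σ (y + Δ))⁺ := by
  by_cases hy : discreteGaussianPMF σ y ≤ exp ε * discreteGaussianPMF σ (y + d)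
  · linarith [posPart_nonneg (discreteGaussianPMF σ y - exp ε * discreteGaussianPMF σ (y + Δ))]
  have hloss : 2 * ε * σ ^ 2 < (d : ℝ) * (2 * y + d) :=
    not_le.mp fun h => hy (discreteGaussianPMF_le_exp_mul_shift hσ h)
  have hdR : (0 : ℝ) ≤ d := by exact_mod_cast hd
  have hdΔR : (d : ℝ) ≤ Δ := by exact_mod_cast hdΔ
  have hcentre : 0 < 2 * (y : ℝ) + d := by
    by_contra! h
    nlinarith [mul_nonpos_of_nonneg_of_nonpos hdR h, sq_nonneg σ]
  have hfar : discreteGaussianPMF σ (y + Δ) ≤ discreteGaussianPMF σ (y + d) :=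
    discreteGaussianPMF_le_of_sq_le (by push_cast; nlinarith)
  linarith [le_posPart (discreteGaussianPMF σ y - exp ε * discreteGaussianPMF σ (y + Δ)),
    mul_le_mul_of_nonneg_left hfar (exp_pos ε).le]

theorem tsum_subtype_discreteGaussianPMF_sub_le (hσ : σ ≠ 0) {ε : ℝ} (hε : 0 ≤ ε) {Δ a b : ℤ}
    (hab : |a - b| ≤ Δ) (S : Set ℤ) :
    ∑' s : S, discreteGaussianPMF σ (s - a)
      ≤ exp ε * ∑' s : S, discreteGaussianPMF σ (s - b)
        + ∑' y : ℤ, (discreteGaussianPMF σ y - exp ε * discreteGaussianPMF σ (y + Δ))⁺ := by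
  have hsum := summable_discreteGaussianPMF hσ
  have hloss := hsum.posPart_sub_mul discreteGaussianPMF_nonneg
    (fun y => discreteGaussianPMF_nonneg (σ := σ) (y + Δ)) (exp_pos ε).le
  have hshift (c : ℤ) : Summable fun s => discreteGaussianPMF σ (s - c) :=
    (Equiv.subRight c).summable_iff.mpr hsum
  obtain ⟨hab₁, hab₂⟩ := abs_le.mp hab
  rcases le_total b a with hba | hab'
  · refine tsum_subtype_le_mul_add_tsum (Equiv.subRight a) _ (hshift a) (hshift b) hloss
      (fun _ => posPart_nonneg _) (fun s => ?_) S
    simpa using discreteGaussianPMF_le_exp_mul_shift_add_posPart (Δ := Δ) hσ hε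
      (sub_nonneg.mpr hba) (by omega) (s - a)
  · -- reflect `y ↦ -y`, which turns the shift `a - b ≤ 0` into `b - a ≥ 0`
    refine tsum_subtype_le_mul_add_tsum (Equiv.subLeft a) _ (hshift a) (hshift b) hloss
      (fun _ => posPart_nonneg _) (fun s => ?_) S
    have h := discreteGaussianPMF_le_exp_mul_shift_add_posPart (Δ := Δ) hσ hε
      (sub_nonneg.mpr hab') (by omega) (a - s)
    rw [show a - s + (b - a) = -(s - b) by ring, discreteGaussianPMF_neg] at h
    rwa [← neg_sub a s, discreteGaussianPMF_neg]

theorem tsum_posPart_discreteGaussianPMF_sub_exp_mul_shift (hσ : σ ≠ 0) (ε : ℝ) {Δ : ℤ}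
    (hΔ : 0 < Δ) :
    ∑' y : ℤ, (discreteGaussianPMF σ y - exp ε * discreteGaussianPMF σ (y + Δ))⁺
      = (∑' x : {x : ℤ // ε * σ ^ 2 / (Δ : ℝ) - (Δ : ℝ) / 2 < ((x : ℤ) : ℝ)},
          discreteGaussianPMF σ x)
        - exp ε * ∑' x : {x : ℤ // ε * σ ^ 2 / (Δ : ℝ) + (Δ : ℝ) / 2 < ((x : ℤ) : ℝ)},
          discreteGaussianPMF σ x := by
  set t := ε * σ ^ 2 / (Δ : ℝ) - (Δ : ℝ) / 2
  have hΔR : (0 : ℝ) < Δ := by exact_mod_cast hΔ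
  have hthreshold (y : ℤ) : t < y ↔ 2 * ε * σ ^ 2 < (Δ : ℝ) * (2 * y + Δ) := by
    rw [sub_lt_iff_lt_add, div_lt_iff₀ hΔR]
    constructor <;> intro h <;> linarith
  have hsupport : (fun y => (discreteGaussianPMF σ y - exp ε * discreteGaussianPMF σ (y + Δ))⁺)
      = {y : ℤ | t < y}.indicator
          fun y => discreteGaussianPMF σ y - exp ε * discreteGaussianPMF σ (y + Δ) := by
    ext y
    by_cases hy : t < y
    · rw [Set.indicator_of_mem (s := {y : ℤ | t < y}) hy, posPart_eq_self, sub_nonneg]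
      exact exp_mul_shift_le_discreteGaussianPMF hσ ((hthreshold y).mp hy).le
    · rw [Set.indicator_of_notMem (s := {y : ℤ | t < y}) hy, posPart_eq_zero, sub_nonpos]
      exact discreteGaussianPMF_le_exp_mul_shift hσ (not_lt.mp (mt (hthreshold y).mpr hy))
  have hshift : ∑' x : {x : ℤ // ε * σ ^ 2 / (Δ : ℝ) + (Δ : ℝ) / 2 < ((x : ℤ) : ℝ)},
      discreteGaussianPMF σ x = ∑' y : {y : ℤ // t < y}, discreteGaussianPMF σ (y + Δ) := by
    let e : {y : ℤ // t < y} ≃ {x : ℤ // ε * σ ^ 2 / (Δ : ℝ) + (Δ : ℝ) / 2 < ((x : ℤ) : ℝ)} :=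
      (Equiv.addRight Δ).subtypeEquiv fun y => by
        simp only [Equiv.coe_addRight, Int.cast_add, t]
        constructor <;> intro h <;> linarith
    exact (e.tsum_eq fun x => discreteGaussianPMF σ x).symm
  have hsum := summable_discreteGaussianPMF hσ
  rw [hsupport, ← tsum_subtype, hshift, ← tsum_mul_left]
  exact (hsum.subtype {y : ℤ | t < y}).tsum_sub
    ((((Equiv.addRight Δ).summable_iff.mpr hsum).subtype {y : ℤ | t < y}).mul_left _)

end

/-- The discrete Gaussian mechanism satisfies (ε,δ)-DP with the exact
`δ = Pr[Y > εσ²/Δ − Δ/2] − e^ε · Pr[Y > εσ²/Δ + Δ/2]`, where `Y` has PMF on ℤ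
proportional to `x ↦ e^{−x²/(2σ²)}`. -/
theorem discrete_gaussian_mechanism_eps_delta_dp
    (ε σ : ℝ) (hε : 0 < ε) (hσ : 0 < σ) (Δ : ℤ) (hΔ : 0 < Δ)
    (f : ℤ → ℝ)
    (hf : ∀ x : ℤ, f x = Real.exp (-(x : ℝ) ^ 2 / (2 * σ ^ 2))
        / ∑' z : ℤ, Real.exp (-(z : ℝ) ^ 2 / (2 * σ ^ 2)))
    (δ : ℝ)
    (hδ : δ = (∑' x : {x : ℤ // ε * σ ^ 2 / (Δ : ℝ) - (Δ : ℝ) / 2 < ((x : ℤ) : ℝ)}, f x)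
        - Real.exp ε *
          ∑' x : {x : ℤ // ε * σ ^ 2 / (Δ : ℝ) + (Δ : ℝ) / 2 < ((x : ℤ) : ℝ)}, f x)
    (a b : ℤ) (hab : |a - b| ≤ Δ) (S : Set ℤ) :
    ∑' s : S, f ((s : ℤ) - a) ≤ Real.exp ε * ∑' s : S, f ((s : ℤ) - b) + δ := by
  obtain rfl : f = discreteGaussianPMF σ := funext hf
  rw [hδ, ← tsum_posPart_discreteGaussianPMF_sub_exp_mul_shift hσ.ne' ε hΔ]
  exact tsum_subtype_discreteGaussianPMF_sub_le hσ.ne' hε.le hab S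
end

section
/- Let σ > 0 and let Y have the discrete Gaussian distribution N_ℤ(σ²), i.e., Pr[Y = x] = e^{−x²/(2σ²)} / Σ_{z∈ℤ} e^{−z²/(2σ²)}. Then for every real N ≥ 0, Pr[|Y| ≥ N] ≤ 2·e^{−N²/(2σ²)}. In particular, the statistical distance between N_ℤ(σ²) and its truncation to (−N, N) ∩ ℤ is at most 2·e^{−N²/(2σ²)}. -/
/-!
Put `m = ⌈N⌉`. For `N ≤ |x|` one has `x² ≥ N² + (|x| - m)²`, so every Gaussian weight in the
tail is at most `e^{-N²/(2σ²)}` times the weight at `|x| - m`; moving the two halves of the tail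
towards the origin by `m` loses at most a factor `2` against the full normalising sum.
Conditioning on `A = (-N, N)` moves mass only inside `A`, by exactly the amount `1 - P(A)` that
lies outside it, so the statistical distance to the truncation is the tail `P(Aᶜ)`.
-/

open Real

lemma summable_exp_neg_sq_div {c : ℝ} (hc : 0 < c) :
    Summable fun x : ℤ => exp (-(x : ℝ) ^ 2 / c) := by
  refine (summable_pow_mul_jacobiTheta₂_term_bound 0 (T := 1 / (π * c)) (by positivity) 0).congr
    fun n => ?_
  simp only [pow_zero, one_mul, mul_zero, zero_mul, sub_zero]
  congr 1
  field_simp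

lemma exp_neg_sq_div_le_mul {c N m y : ℝ} (hc : 0 ≤ c) (hN : 0 ≤ N) (hNm : N ≤ m)
    (hmy : m ≤ y) : exp (-y ^ 2 / c) ≤ exp (-N ^ 2 / c) * exp (-(y - m) ^ 2 / c) := by
  rw [← exp_add, exp_le_exp, ← add_div]
  refine div_le_div_of_nonneg_right ?_ hc
  nlinarith [mul_le_mul hNm hNm hN (hN.trans hNm), mul_nonneg (hN.trans hNm) (sub_nonneg.2 hmy)]

lemma tsum_exp_neg_sq_div_abs_ge_le {c N : ℝ} (hc : 0 < c) (hN : 0 ≤ N) :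
    ∑' x : {x : ℤ // N ≤ |(x : ℝ)|}, exp (-(x : ℝ) ^ 2 / c)
      ≤ 2 * exp (-N ^ 2 / c) * ∑' x : ℤ, exp (-(x : ℝ) ^ 2 / c) := by
  set g : ℤ → ℝ := fun x => exp (-(x : ℝ) ^ 2 / c)
  have hg : Summable g := summable_exp_neg_sq_div hc
  have hg0 (x : ℤ) : 0 ≤ g x := (exp_pos _).le
  set m := ⌈N⌉
  have hshift : Summable fun x => g (x - m) := hg.comp_injective sub_left_injective
  have hshift_neg : Summable fun x => g (-x - m) :=
    hg.comp_injective (sub_left_injective.comp neg_injective)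
  have hfold (x : ℤ) : g (|x| - m) ≤ g (x - m) + g (-x - m) := by
    rcases abs_choice x with hx | hx <;> rw [hx]
    · exact le_add_of_nonneg_right (hg0 _)
    · exact le_add_of_nonneg_left (hg0 _)
  have hfold_sum : Summable fun x => exp (-N ^ 2 / c) * g (|x| - m) :=
    (Summable.of_nonneg_of_le (fun x => hg0 _) hfold (hshift.add hshift_neg)).mul_left _
  have htail (x : {x : ℤ // N ≤ |(x : ℝ)|}) : g x ≤ exp (-N ^ 2 / c) * g (|x.1| - m) := by
    have hm : (m : ℝ) ≤ |(x : ℝ)| := by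
      rw [← Int.cast_abs]; exact_mod_cast Int.ceil_le.2 (by exact_mod_cast x.2)
    have := exp_neg_sq_div_le_mul hc.le hN (Int.le_ceil N) hm
    rw [sq_abs] at this
    simpa only [g, Int.cast_sub, Int.cast_abs] using this
  calc ∑' x : {x : ℤ // N ≤ |(x : ℝ)|}, g x
      ≤ ∑' x : {x : ℤ // N ≤ |(x : ℝ)|}, exp (-N ^ 2 / c) * g (|x.1| - m) :=
        (hg.subtype _).tsum_le_tsum htail (hfold_sum.subtype _)
    _ ≤ ∑' x : ℤ, exp (-N ^ 2 / c) * g (|x| - m) :=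
        hfold_sum.tsum_subtype_le _ {x : ℤ | N ≤ |(x : ℝ)|} fun x => by positivity
    _ ≤ ∑' x : ℤ, exp (-N ^ 2 / c) * (g (x - m) + g (-x - m)) :=
        hfold_sum.tsum_le_tsum (fun x => by gcongr; exact hfold x)
          ((hshift.add hshift_neg).mul_left _)
    _ = 2 * exp (-N ^ 2 / c) * ∑' x : ℤ, g x := by
        have h1 : ∑' x, g (x - m) = ∑' x, g x := (Equiv.subRight m).tsum_eq g
        have h2 : ∑' x, g (-x - m) = ∑' x, g x :=
          ((Equiv.neg ℤ).trans (Equiv.subRight m)).tsum_eq g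
        rw [tsum_mul_left, hshift.tsum_add hshift_neg, h1, h2]
        ring

lemma half_tsum_abs_sub_indicator_div_le {α : Type*} {f : α → ℝ} (hf0 : ∀ x, 0 ≤ f x)
    (hf : Summable f) (hf1 : ∑' x, f x = 1) (A : Set α) :
    1 / 2 * ∑' x, |f x - A.indicator (fun x => f x / ∑' y : A, f y) x| ≤ ∑' x : ↥Aᶜ, f x := by
  set Q := ∑' y : A, f y
  have hQ0 : 0 ≤ Q := tsum_nonneg fun x => hf0 x
  have hcompl : ∑' x : ↥Aᶜ, f x = 1 - Q := by
    rw [← hf1, ← hf.tsum_subtype_add_tsum_subtype_compl A]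
    ring
  have hpoint (x : α) : |f x - A.indicator (fun x => f x / Q) x|
      = A.indicator (fun x => f x * |1 - Q⁻¹|) x + Aᶜ.indicator f x := by
    by_cases hx : x ∈ A
    · simp only [Set.indicator_of_mem hx, Set.indicator_of_notMem (Set.notMem_compl_iff.2 hx),
        add_zero, div_eq_mul_inv, ← mul_one_sub, abs_mul, abs_of_nonneg (hf0 x)]
    · simp only [Set.indicator_of_notMem hx, Set.indicator_of_mem (Set.mem_compl hx), sub_zero,
        zero_add, abs_of_nonneg (hf0 x)]
  have hdist : ∑' x, |f x - A.indicator (fun x => f x / Q) x| = Q * |1 - Q⁻¹| + (1 - Q) := by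
    rw [tsum_congr hpoint, ((hf.mul_right _).indicator A).tsum_add (hf.indicator _),
      ← tsum_subtype, ← tsum_subtype, tsum_mul_right, hcompl]
  -- `Q = 0` is the junk case `q = 0`; otherwise `Q ≤ 1` and `Q * |1 - Q⁻¹| = 1 - Q`.
  have hinside : Q * |1 - Q⁻¹| ≤ 1 - Q := by
    rcases hQ0.eq_or_lt with hQ | hQ
    · simp [← hQ]
    · have hQ1 : Q ≤ 1 := by linarith [(tsum_nonneg fun x => hf0 x : 0 ≤ ∑' x : ↥Aᶜ, f x)]
      rw [abs_of_nonpos (by linarith [one_le_inv₀ hQ |>.2 hQ1]), mul_neg, mul_sub,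
        mul_inv_cancel₀ hQ.ne']
      linarith
  rw [hdist]
  linarith

/-- Tail of the discrete Gaussian distribution `N_ℤ(σ²)`: for every real `N ≥ 0`,
`Pr[|Y| ≥ N] ≤ 2·e^{−N²/(2σ²)}`, and the statistical distance between `N_ℤ(σ²)` and its
truncation (conditioning) to `(−N, N) ∩ ℤ` is at most the same bound. -/
theorem discrete_gaussian_tail_and_truncation_distance
    (σ : ℝ) (hσ : 0 < σ) (N : ℝ) (hN : 0 ≤ N)
    (f : ℤ → ℝ)
    (hf : ∀ x : ℤ, f x = Real.exp (-(x : ℝ) ^ 2 / (2 * σ ^ 2))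
        / ∑' z : ℤ, Real.exp (-(z : ℝ) ^ 2 / (2 * σ ^ 2)))
    (q : ℤ → ℝ)
    (hq : ∀ x : ℤ, q x = if -N < (x : ℝ) ∧ (x : ℝ) < N
        then f x / ∑' y : {y : ℤ // -N < (y : ℝ) ∧ (y : ℝ) < N}, f y else 0) :
    (∑' x : {x : ℤ // N ≤ |(x : ℝ)|}, f x) ≤ 2 * Real.exp (-N ^ 2 / (2 * σ ^ 2))
    ∧ (1 / 2) * ∑' x : ℤ, |f x - q x| ≤ 2 * Real.exp (-N ^ 2 / (2 * σ ^ 2)) := by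
  have hc : 0 < 2 * σ ^ 2 := by positivity
  have hg := summable_exp_neg_sq_div hc
  have hZ : 0 < ∑' z : ℤ, exp (-(z : ℝ) ^ 2 / (2 * σ ^ 2)) :=
    hg.tsum_pos (fun _ => (exp_pos _).le) 0 (exp_pos _)
  have htail : ∑' x : {x : ℤ // N ≤ |(x : ℝ)|}, f x ≤ 2 * exp (-N ^ 2 / (2 * σ ^ 2)) := by
    simp only [hf]
    rw [tsum_div_const, div_le_iff₀ hZ]
    exact tsum_exp_neg_sq_div_abs_ge_le hc hN
  refine ⟨htail, le_trans ?_ htail⟩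
  set A : Set ℤ := {x | -N < (x : ℝ) ∧ (x : ℝ) < N}
  have hqA : q = A.indicator (fun x => f x / ∑' y : A, f y) := funext fun x => by
    rw [hq x, Set.indicator_apply]
    congr
  have hAc : Aᶜ = {x : ℤ | N ≤ |(x : ℝ)|} := by
    ext x
    simp [A, ← abs_lt]
  have hf_eq : f = fun x : ℤ =>
      exp (-(x : ℝ) ^ 2 / (2 * σ ^ 2)) / ∑' z : ℤ, exp (-(z : ℝ) ^ 2 / (2 * σ ^ 2)) :=
    funext hf
  have hf1 : ∑' x, f x = 1 := by rw [hf_eq, tsum_div_const, div_self hZ.ne']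
  calc 1 / 2 * ∑' x : ℤ, |f x - q x| ≤ ∑' x : ↥Aᶜ, f x :=
        hqA ▸ half_tsum_abs_sub_indicator_div_le (fun x => hf_eq ▸ by positivity)
          (hf_eq ▸ hg.div_const _) hf1 A
    _ = ∑' x : {x : ℤ // N ≤ |(x : ℝ)|}, f x := by rw [hAc]; rfl
end

section
/- Let t > 0 and κ ∈ ℕ. For j = 0, 1, …, κ−1 let B_j be independent Bernoulli random variables with Pr[B_j = 1] = e^{−2^j/t}/(1 + e^{−2^j/t}). Then the random variable Y = Σ_{j=0}^{κ−1} 2^j·B_j satisfies, for every y ∈ {0, 1, …, 2^κ − 1}, Pr[Y = y] = e^{−y/t} / Σ_{z=0}^{2^κ−1} e^{−z/t}. That is, each bit of a (truncated) geometric sample with mass function proportional to e^{−y/t} on {0, …, 2^κ − 1} can be sampled independently as a biased coin. -/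
/-!
Write `r = e^{-1/t}`, so that the bias of bit `j` is `r^{2^j} / (1 + r^{2^j})`. A bit pattern `b`
then has probability `∏ⱼ r^{bⱼ 2^j} / ∏ⱼ (1 + r^{2^j}) = r^Y / ∏ⱼ (1 + r^{2^j})`, and expanding
the product over all patterns, i.e. over all binary expansions, gives
`∏ⱼ (1 + r^{2^j}) = ∑_{z < 2^κ} r^z`. Each `y < 2^κ` has exactly one binary expansion.
-/

open Finset

def bitsValue {κ : ℕ} (b : Fin κ → Bool) : ℕ :=
  ∑ j : Fin κ, if b j then 2 ^ (j : ℕ) else 0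

def bitsEquiv (κ : ℕ) : (Fin κ → Bool) ≃ Fin (2 ^ κ) :=
  (Equiv.arrowCongr (Equiv.refl (Fin κ)) finTwoEquiv.symm).trans finFunctionFinEquiv

theorem coe_bitsEquiv {κ : ℕ} (b : Fin κ → Bool) : (bitsEquiv κ b : ℕ) = bitsValue b := by
  simp only [bitsEquiv, Equiv.trans_apply, finFunctionFinEquiv_apply, bitsValue]
  refine sum_congr rfl fun j _ => ?_
  cases hb : b j <;> simp [hb, finTwoEquiv]

theorem filter_bitsValue_eq {κ y : ℕ} (hy : y < 2 ^ κ) :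
    univ.filter (fun b : Fin κ → Bool => bitsValue b = y) = {(bitsEquiv κ).symm ⟨y, hy⟩} := by
  ext b
  simp only [mem_filter, mem_univ, true_and, mem_singleton, Equiv.eq_symm_apply, Fin.ext_iff,
    coe_bitsEquiv]

theorem pow_bitsValue {M : Type*} [CommMonoid M] (r : M) {κ : ℕ} (b : Fin κ → Bool) :
    r ^ bitsValue b = ∏ j : Fin κ, if b j then r ^ 2 ^ (j : ℕ) else 1 := by
  rw [bitsValue, ← prod_pow_eq_pow_sum]
  exact prod_congr rfl fun j _ => by split_ifs <;> simp

theorem sum_range_two_pow_pow {R : Type*} [CommSemiring R] (r : R) (κ : ℕ) :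
    ∑ z ∈ range (2 ^ κ), r ^ z = ∏ j : Fin κ, (1 + r ^ 2 ^ (j : ℕ)) :=
  calc ∑ z ∈ range (2 ^ κ), r ^ z = ∑ z : Fin (2 ^ κ), r ^ (z : ℕ) :=
        (Fin.sum_univ_eq_sum_range _ _).symm
    _ = ∑ b : Fin κ → Bool, r ^ bitsValue b := by
        simp only [← (bitsEquiv κ).sum_comp, coe_bitsEquiv]
    _ = ∑ b : Fin κ → Bool, ∏ j : Fin κ, if b j then r ^ 2 ^ (j : ℕ) else 1 := by
        simp only [pow_bitsValue]
    _ = ∏ j : Fin κ, ∑ x : Bool, if x then r ^ 2 ^ (j : ℕ) else 1 :=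
        (Fintype.prod_sum fun (j : Fin κ) (x : Bool) => if x then r ^ 2 ^ (j : ℕ) else 1).symm
    _ = ∏ j : Fin κ, (1 + r ^ 2 ^ (j : ℕ)) := by simp [add_comm]

theorem ite_div_one_add_eq {K : Type*} [Field K] (c : Prop) [Decidable c] {q : K}
    (hq : 1 + q ≠ 0) :
    (if c then q / (1 + q) else 1 - q / (1 + q)) = (if c then q else 1) / (1 + q) := by
  split_ifs
  · rfl
  · field_simp
    ring

theorem sum_filter_bitsValue_prod_bernoulli {K : Type*} [Field K] (r : K)
    (hr : ∀ j : ℕ, 1 + r ^ 2 ^ j ≠ 0) {κ y : ℕ} (hy : y < 2 ^ κ) :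
    ∑ b ∈ univ.filter (fun b : Fin κ → Bool => bitsValue b = y),
      ∏ j : Fin κ, (if b j then r ^ 2 ^ (j : ℕ) / (1 + r ^ 2 ^ (j : ℕ))
        else 1 - r ^ 2 ^ (j : ℕ) / (1 + r ^ 2 ^ (j : ℕ)))
    = r ^ y / ∑ z ∈ range (2 ^ κ), r ^ z := by
  rw [filter_bitsValue_eq hy, sum_singleton]
  generalize hb : (bitsEquiv κ).symm ⟨y, hy⟩ = b
  have hy_eq : y = bitsValue b := by rw [← hb, ← coe_bitsEquiv, Equiv.apply_symm_apply]
  rw [sum_range_two_pow_pow, hy_eq, pow_bitsValue, ← prod_div_distrib]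
  exact prod_congr rfl fun j _ => ite_div_one_add_eq _ (hr j)

open Real

theorem geometric_bits_sampled_independently_general
    (t : ℝ) (κ : ℕ)
    (p : ℕ → ℝ)
    (hp : ∀ j : ℕ, p j = Real.exp (-(2 : ℝ) ^ j / t) / (1 + Real.exp (-(2 : ℝ) ^ j / t)))
    (y : ℕ) (hy : y < 2 ^ κ) :
    ∑ b ∈ Finset.univ.filter
        (fun b : Fin κ → Bool => (∑ j : Fin κ, if b j then 2 ^ (j : ℕ) else 0) = y),
      ∏ j : Fin κ, (if b j then p (j : ℕ) else 1 - p (j : ℕ))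
    = Real.exp (-(y : ℝ) / t) / ∑ z ∈ Finset.range (2 ^ κ), Real.exp (-(z : ℝ) / t) := by
  have exp_nat_div (n : ℕ) : exp (-(n : ℝ) / t) = exp (-1 / t) ^ n := by
    rw [← exp_nat_mul]
    ring_nf
  have exp_two_pow_div (j : ℕ) : exp (-(2 : ℝ) ^ j / t) = exp (-1 / t) ^ 2 ^ j := by
    rw [← exp_nat_div]
    push_cast
    rfl
  simp only [hp, exp_two_pow_div, exp_nat_div]
  exact sum_filter_bitsValue_prod_bernoulli _ (fun j => by positivity) hy

/-- Bitwise (ODO) sampling of a truncated geometric variable: if the `j`-th bit is an independent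
Bernoulli coin with bias `e^{−2^j/t}/(1 + e^{−2^j/t})`, then `Y = Σⱼ 2^j·Bⱼ` has PMF
`y ↦ e^{−y/t} / Σ_{z<2^κ} e^{−z/t}` on `{0, …, 2^κ − 1}`. -/
theorem geometric_bits_sampled_independently
    (t : ℝ) (ht : 0 < t) (κ : ℕ)
    (p : ℕ → ℝ)
    (hp : ∀ j : ℕ, p j = Real.exp (-(2 : ℝ) ^ j / t) / (1 + Real.exp (-(2 : ℝ) ^ j / t)))
    (y : ℕ) (hy : y < 2 ^ κ) :
    ∑ b ∈ Finset.univ.filter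
        (fun b : Fin κ → Bool => (∑ j : Fin κ, if b j then 2 ^ (j : ℕ) else 0) = y),
      ∏ j : Fin κ, (if b j then p (j : ℕ) else 1 - p (j : ℕ))
    = Real.exp (-(y : ℝ) / t) / ∑ z ∈ Finset.range (2 ^ κ), Real.exp (-(z : ℝ) / t) :=
  geometric_bits_sampled_independently_general t κ p hp y hy
end

section
/- Let p ∈ (0,1). Let Y be a geometric random variable on ℕ with Pr[Y = y] = (1 − p)·p^y, and let S be an independent uniform random sign in {−1, +1}. Then, conditioned on the event ¬(S = −1 ∧ Y = 0), the random variable Z = S·Y has the discrete Laplace distribution: for every z ∈ ℤ, Pr[Z = z | ¬(S = −1 ∧ Y = 0)] = ((1 − p)/(1 + p))·p^{|z|}. -/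
/-!
Every nonzero integer `z` arises from exactly one pair `(S, Y)`, namely `(sign z, |z|)`, while
`0` arises from both `(+1, 0)` and `(−1, 0)`; discarding `(−1, 0)` makes `(S, Y) ↦ S·Y` a
bijection onto `ℤ`. Hence for any law `g` of `Y` the conditional mass of `z` is
`½g(|z|) / (1 − ½g(0))`; for `g(y) = (1 − p)pʸ` this is `(1 − p)p^{|z|} / (1 + p)`.
-/

namespace DiscreteLaplace

def ofInt (z : ℤ) : Bool × ℕ := (decide (0 ≤ z), z.natAbs)

theorem eq_ofInt_iff (sy : Bool × ℕ) (z : ℤ) :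
    (¬(sy.1 = false ∧ sy.2 = 0) ∧ (if sy.1 then (sy.2 : ℤ) else -(sy.2 : ℤ)) = z) ↔
      sy = ofInt z := by
  obtain ⟨_ | _, y⟩ := sy <;> simp only [ofInt, Prod.mk.injEq] <;> grind

section Sums

variable {M : Type*} [TopologicalSpace M]

theorem tsum_ite_signed_eq [AddCommMonoid M] (w : Bool × ℕ → M) (z : ℤ) :
    (∑' sy : Bool × ℕ,
      if ¬(sy.1 = false ∧ sy.2 = 0) ∧ (if sy.1 then (sy.2 : ℤ) else -(sy.2 : ℤ)) = z
      then w sy else 0) = w (ofInt z) := by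
  simp_rw [eq_ofInt_iff, tsum_ite_eq]

theorem hasSum_ite_not_false_zero [AddCommGroup M] [IsTopologicalAddGroup M]
    {w : Bool × ℕ → M} {a : M} (hw : HasSum w a) :
    HasSum (fun sy : Bool × ℕ => if ¬(sy.1 = false ∧ sy.2 = 0) then w sy else 0)
      (a - w (false, 0)) := by
  convert hw.update (false, 0) 0 using 1
  · ext ⟨_ | _, _ | _⟩ <;> simp [Function.update]
  · abel

theorem hasSum_bool_prod {α : Type*} [AddCommMonoid M] [ContinuousAdd M] {f : α → M} {a : M}
    (hf : HasSum f a) : HasSum (fun sy : Bool × α => f sy.2) (a + a) :=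
  (Equiv.boolProdEquivSum α).symm.hasSum_iff.mp (HasSum.sum hf hf)

end Sums

theorem signed_conditional_mass_eq {g : ℕ → ℝ} (hg : HasSum g 1) {P : Bool × ℕ → ℝ}
    (hP : ∀ sy : Bool × ℕ, P sy = 1 / 2 * g sy.2) (z : ℤ) :
    (∑' sy : Bool × ℕ,
      if ¬(sy.1 = false ∧ sy.2 = 0) ∧ (if sy.1 then (sy.2 : ℤ) else -(sy.2 : ℤ)) = z
      then P sy else 0)
    / (∑' sy : Bool × ℕ, if ¬(sy.1 = false ∧ sy.2 = 0) then P sy else 0)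
      = g z.natAbs / (2 - g 0) := by
  have hP_sum : HasSum P 1 := by
    have h := (hasSum_bool_prod hg).mul_left (1 / 2)
    rwa [one_add_one_eq_two, one_div_mul_cancel two_ne_zero, ← funext hP] at h
  rw [tsum_ite_signed_eq, (hasSum_ite_not_false_zero hP_sum).tsum_eq, hP, hP,
    show (1 : ℝ) - 1 / 2 * g 0 = (2 - g 0) / 2 by ring, ofInt]
  field_simp

end DiscreteLaplace

open DiscreteLaplace in
/-- A geometric sample `Y` (PMF `y ↦ (1−p)·pʸ` on ℕ) together with an independent uniform sign
`S ∈ {−1, +1}` (encoded by a `Bool`, `true ↦ +1`, `false ↦ −1`), conditioned on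
`¬(S = −1 ∧ Y = 0)`, gives a discrete Laplace sample:
`Pr[S·Y = z | ¬(S = −1 ∧ Y = 0)] = ((1−p)/(1+p))·p^{|z|}` for all `z ∈ ℤ`. -/
theorem geometric_with_sign_is_discrete_laplace
    (p : ℝ) (hp : p ∈ Set.Ioo (0 : ℝ) 1)
    (P : Bool × ℕ → ℝ)
    (hP : ∀ sy : Bool × ℕ, P sy = (1 / 2) * ((1 - p) * p ^ sy.2)) :
    ∀ z : ℤ,
      (∑' sy : Bool × ℕ,
        if ¬(sy.1 = false ∧ sy.2 = 0)
            ∧ (if sy.1 then (sy.2 : ℤ) else -(sy.2 : ℤ)) = z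
        then P sy else 0)
      / (∑' sy : Bool × ℕ, if ¬(sy.1 = false ∧ sy.2 = 0) then P sy else 0)
      = (1 - p) / (1 + p) * p ^ z.natAbs := by
  obtain ⟨hp0, hp1⟩ := hp
  have hgeom : HasSum (fun y : ℕ => (1 - p) * p ^ y) 1 := by
    have h := (hasSum_geometric_of_lt_one hp0.le hp1).mul_left (1 - p)
    rwa [mul_inv_cancel₀ (sub_pos.mpr hp1).ne'] at h
  intro z
  rw [signed_conditional_mass_eq hgeom hP z]
  ring
end

section
/- Let p ∈ (0,1) and let G₁ and G₂ be independent geometric random variables on ℕ, each with Pr[G_i = k] = (1 − p)·p^k. Then the difference G₁ − G₂ has the discrete Laplace distribution: for every z ∈ ℤ, Pr[G₁ − G₂ = z] = ((1 − p)/(1 + p))·p^{|z|}. -/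
/-! For `z = ±m` only the pairs `(n + m, n)` (resp. `(n, n + m)`) contribute, so the sum collapses to
`(1 - p)² pᵐ ∑ₙ (p²)ⁿ = (1 - p)² pᵐ / ((1 - p)(1 + p))`. -/

open Real

theorem tsum_mul_geometric_shift {p : ℝ} (hp : |p| < 1) (m : ℕ) :
    ∑' n : ℕ, ((1 - p) * p ^ (n + m)) * ((1 - p) * p ^ n) = (1 - p) / (1 + p) * p ^ m := by
  obtain ⟨hp_lo, hp_hi⟩ := abs_lt.mp hp
  have hsq : |p ^ 2| < 1 := by
    rw [abs_pow, sq_lt_one_iff₀ (abs_nonneg p)]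
    exact hp
  have hsub : (1 : ℝ) - p ≠ 0 := by linarith
  have hadd : (1 : ℝ) + p ≠ 0 := by linarith
  calc ∑' n : ℕ, ((1 - p) * p ^ (n + m)) * ((1 - p) * p ^ n)
      = ∑' n : ℕ, ((1 - p) ^ 2 * p ^ m) * (p ^ 2) ^ n := by
        congr 1 with n
        ring
    _ = (1 - p) ^ 2 * p ^ m * (1 - p ^ 2)⁻¹ := by
        rw [tsum_mul_left, tsum_geometric_of_abs_lt_one hsq]
    _ = (1 - p) / (1 + p) * p ^ m := by
        rw [show (1 : ℝ) - p ^ 2 = (1 - p) * (1 + p) by ring]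
        field_simp

theorem tsum_ite_sub_eq_natCast {α : Type*} [AddCommMonoid α] [TopologicalSpace α]
    (g : ℕ × ℕ → α) (m : ℕ) :
    ∑' k : ℕ × ℕ, (if (k.1 : ℤ) - k.2 = m then g k else 0) = ∑' n : ℕ, g (n + m, n) := by
  have hinj : Function.Injective fun n : ℕ => (n + m, n) := fun a b h => (Prod.ext_iff.mp h).2
  have hsupp : (Function.support fun k : ℕ × ℕ => if (k.1 : ℤ) - k.2 = m then g k else 0) ⊆
      Set.range fun n : ℕ => (n + m, n) := by
    rintro ⟨a, b⟩ hk
    have hab : (a : ℤ) - b = m := by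
      by_contra h
      exact hk (if_neg h)
    exact ⟨b, Prod.ext (show b + m = a by omega) rfl⟩
  rw [← hinj.tsum_eq hsupp]
  congr 1 with n
  simp

theorem tsum_ite_sub_eq_neg_natCast {α : Type*} [AddCommMonoid α] [TopologicalSpace α]
    (g : ℕ × ℕ → α) (m : ℕ) :
    ∑' k : ℕ × ℕ, (if (k.1 : ℤ) - k.2 = -m then g k else 0) = ∑' n : ℕ, g (n, n + m) := by
  rw [← (Equiv.prodComm ℕ ℕ).tsum_eq]
  refine Eq.trans ?_ (tsum_ite_sub_eq_natCast (g ∘ Prod.swap) m)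
  congr 1 with ⟨a, b⟩
  simp only [Equiv.prodComm_apply, Prod.fst_swap, Prod.snd_swap, Function.comp_apply]
  congr 1
  exact propext (by omega)

/-- The difference of two independent geometric variables (PMF `k ↦ (1−p)·pᵏ` on ℕ) has the
discrete Laplace distribution: `Pr[G₁ − G₂ = z] = ((1−p)/(1+p))·p^{|z|}` for all `z ∈ ℤ`. -/
theorem geometric_difference_is_discrete_laplace
    (p : ℝ) (hp : p ∈ Set.Ioo (0 : ℝ) 1) (z : ℤ) :
    ∑' k : ℕ × ℕ,
      (if (k.1 : ℤ) - (k.2 : ℤ) = z then ((1 - p) * p ^ k.1) * ((1 - p) * p ^ k.2) else 0)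
    = (1 - p) / (1 + p) * p ^ z.natAbs := by
  have hp_abs : |p| < 1 := abs_lt.mpr ⟨by linarith [hp.1], hp.2⟩
  rcases Int.eq_nat_or_neg z with ⟨m, rfl | rfl⟩
  · rw [tsum_ite_sub_eq_natCast, Int.natAbs_natCast]
    exact tsum_mul_geometric_shift hp_abs m
  · rw [tsum_ite_sub_eq_neg_natCast, Int.natAbs_neg, Int.natAbs_natCast,
      ← tsum_mul_geometric_shift hp_abs m]
    simp only [mul_comm]
end

section
/- Let t > 0 and σ > 0. Let Y have the discrete Laplace distribution Lap_ℤ(t) with Pr[Y = y] proportional to e^{−|y|/t}, and given Y = y accept with probability a(y) = exp(−(|y| − σ²/t)²/(2σ²)) (i.e., let B be a Bernoulli random variable with conditional success probability a(Y)). Then the conditional distribution of Y given acceptance B = 1 is the discrete Gaussian N_ℤ(σ²): for every y ∈ ℤ, Pr[Y = y | B = 1] = e^{−y²/(2σ²)} / Σ_{z∈ℤ} e^{−z²/(2σ²)}. -/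
open Real

/-!
Completing the square, `e^{-|y|/t} · a(y) = e^{-σ²/(2t²)} · e^{-y²/(2σ²)}`, so the accepted
weight of `y` is a constant multiple of its Gaussian weight, and the constant cancels on
normalizing. The constant is nonzero because the Laplace weights are summable with positive sum.
-/
lemma summable_exp_neg_abs_div {t : ℝ} (ht : 0 < t) :
    Summable fun z : ℤ ↦ exp (-|(z : ℝ)| / t) := by
  have hnat : Summable fun n : ℕ ↦ exp (-|(n : ℝ)| / t) := by
    simpa only [Nat.abs_cast, neg_div, mul_neg, mul_one_div] using
      summable_exp_nat_mul_iff.mpr (neg_neg_of_pos (one_div_pos.mpr ht))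
  exact .of_nat_of_neg (by simpa using hnat) (by simpa using hnat)

lemma exp_neg_abs_div_mul_exp_neg_sq {t σ : ℝ} (ht : t ≠ 0) (hσ : σ ≠ 0) (y : ℝ) :
    exp (-|y| / t) * exp (-(|y| - σ ^ 2 / t) ^ 2 / (2 * σ ^ 2))
      = exp (-σ ^ 2 / (2 * t ^ 2)) * exp (-y ^ 2 / (2 * σ ^ 2)) := by
  rw [← exp_add, ← exp_add, ← sq_abs y]
  congr 1
  field_simp
  ring

lemma div_tsum_eq_div_tsum_of_eq_const_mul {α K : Type*} [Field K] [TopologicalSpace K]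
    [IsTopologicalSemiring K] [T2Space K] {g h : α → K} {c : K} (hc : c ≠ 0)
    (hgh : ∀ z, g z = c * h z) (y : α) :
    g y / ∑' z, g z = h y / ∑' z, h z := by
  simp only [hgh, tsum_mul_left, mul_div_mul_left _ _ hc]

/-- Correctness of rejection sampling from discrete Laplace to discrete Gaussian: if `Y` has the
discrete Laplace PMF proportional to `e^{−|y|/t}` and is accepted with probability
`a(y) = exp(−(|y| − σ²/t)²/(2σ²))`, then the conditional law of `Y` given acceptance is the
discrete Gaussian `N_ℤ(σ²)`. -/
theorem rejection_sampling_laplace_to_gaussian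
    (t σ : ℝ) (ht : 0 < t) (hσ : 0 < σ)
    (f : ℤ → ℝ)
    (hf : ∀ y : ℤ, f y = Real.exp (-|(y : ℝ)| / t) / ∑' z : ℤ, Real.exp (-|(z : ℝ)| / t))
    (a : ℤ → ℝ)
    (ha : ∀ y : ℤ, a y = Real.exp (-(|(y : ℝ)| - σ ^ 2 / t) ^ 2 / (2 * σ ^ 2))) :
    ∀ y : ℤ, f y * a y / (∑' y' : ℤ, f y' * a y')
      = Real.exp (-(y : ℝ) ^ 2 / (2 * σ ^ 2))
        / ∑' z : ℤ, Real.exp (-(z : ℝ) ^ 2 / (2 * σ ^ 2)) := by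
  have hZ : 0 < ∑' z : ℤ, exp (-|(z : ℝ)| / t) :=
    (summable_exp_neg_abs_div ht).tsum_pos (fun _ ↦ (exp_pos _).le) 0 (exp_pos _)
  refine div_tsum_eq_div_tsum_of_eq_const_mul
    (c := exp (-σ ^ 2 / (2 * t ^ 2)) / ∑' z : ℤ, exp (-|(z : ℝ)| / t)) (by positivity) fun z ↦ ?_
  rw [hf, ha, div_mul_eq_mul_div, exp_neg_abs_div_mul_exp_neg_sq ht.ne' hσ.ne', div_mul_eq_mul_div]
end
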